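/- Let (G,𝒳,k) be a Yes-instance of EDP where G is a split graph with split partition (C, I), let 𝒫 be a minimum solution of (G,𝒳,k), let P ∈ 𝒫, and let v_1,…,v_ℓ be the vertices of V(P) ∩ C listed in the order in which they occur along P. Let e_i = v_i v_{i'} and e_j = v_j v_{j'} be two distinct edges with i < i', j < j', and i ≤ j, which are intersecting, i.e., j < i'. Then e_i and e_j are non-compatible: there is no single path P' ∈ 𝒫 \ {P} that contains both e_i and e_j. -/

import Mathlib

/-!
Suppose another path `P m` of a minimum solution used an edge `xy` whose ends occur on `P i` in
the order `x, …, z, …, y`, and also passed through `z`. Swap: `P i` takes the edge `xy` instead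
of its segment from `x` to `y`, and `P m` takes that segment instead of `xy`. The multiset of
used edges does not change, so the new family is again edge-disjoint and of the same total
length; but the new `P m` visits `z` twice, and shortcutting it gives a strictly cheaper
solution. Two intersecting edges between clique vertices of `P i` that lie on a common `P m`
always produce such a triple `x, z, y`.
-/

open SimpleGraph Finset

/-- A family of walks in `G` connecting the terminal pairs `X`. -/
abbrev WalkFamily {V : Type*} (G : SimpleGraph V) {ι : Type*} (X : ι → V × V) :=
  ∀ i : ι, G.Walk (X i).1 (X i).2

/-- The walks in the family are pairwise edge-disjoint. -/
def PairwiseEdgeDisjoint {V : Type*} (G : SimpleGraph V) {ι : Type*} (X : ι → V × V)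
    (P : WalkFamily G X) : Prop :=
  ∀ i j : ι, i ≠ j → ∀ e : Sym2 V, e ∈ (P i).edges → e ∉ (P j).edges

/-- A solution of the Edge-Disjoint Paths (EDP) instance `(G, X)`: a family of paths
connecting the terminal pairs that are pairwise edge-disjoint. -/
def IsEDPSolution {V : Type*} (G : SimpleGraph V) {ι : Type*} (X : ι → V × V)
    (P : WalkFamily G X) : Prop :=
  (∀ i, (P i).IsPath) ∧ PairwiseEdgeDisjoint G X P

/-- `(G, X)` is a Yes-instance of EDP. -/
def EDPYes {V : Type*} (G : SimpleGraph V) {ι : Type*} (X : ι → V × V) : Prop :=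
  ∃ P : WalkFamily G X, IsEDPSolution G X P

/-- A minimum solution of the EDP instance `(G, X)`: a solution minimizing the total
number of edges of the paths. -/
def IsMinEDPSolution {V : Type*} (G : SimpleGraph V) {ι : Type*} [Fintype ι]
    (X : ι → V × V) (P : WalkFamily G X) : Prop :=
  IsEDPSolution G X P ∧
    ∀ Q : WalkFamily G X, IsEDPSolution G X Q →
      ∑ i, (P i).length ≤ ∑ i, (Q i).length

/-- `(C, I)` is a split partition of `G`: `V(G)` is the disjoint union of `C` and `I`,
`C` induces a clique, and `I` is an independent set. -/
def IsSplitPartition {V : Type*} (G : SimpleGraph V) (C I : Finset V) : Prop :=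
  (∀ x : V, x ∈ C ∨ x ∈ I) ∧ (∀ x : V, ¬ (x ∈ C ∧ x ∈ I)) ∧
  (∀ x ∈ C, ∀ y ∈ C, x ≠ y → G.Adj x y) ∧ (∀ x ∈ I, ∀ y ∈ I, ¬ G.Adj x y)

open scoped List

theorem List.triple_getElem_sublist {α : Type*} (l : List α) {a b c : ℕ} (hab : a < b)
    (hbc : b < c) (hc : c < l.length) : [l[a], l[b], l[c]] <+ l := by
  simpa using List.map_getElem_sublist (l := l) (is := [⟨a, by omega⟩, ⟨b, by omega⟩, ⟨c, hc⟩])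
    (by simp [Fin.mk_lt_mk]; omega)

theorem Finset.sum_update_update_add {ι M : Type*} [Fintype ι] [DecidableEq ι]
    [AddCommMonoid M] (f : ι → M) {i m : ι} (him : i ≠ m) (a b : M) :
    ∑ n, Function.update (Function.update f m b) i a n + (f i + f m) = ∑ n, f n + (a + b) := by
  have hm : m ∈ univ.erase i := mem_erase.2 ⟨him.symm, mem_univ m⟩
  rw [← add_sum_erase _ _ (mem_univ i), ← add_sum_erase _ _ hm,
    ← add_sum_erase _ f (mem_univ i), ← add_sum_erase _ f hm,
    sum_congr rfl fun n hn => by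
      rw [Function.update_of_ne (ne_of_mem_erase (mem_of_mem_erase hn)),
        Function.update_of_ne (ne_of_mem_erase hn)]]
  simp only [Function.update_self, Function.update_of_ne him.symm]
  abel

namespace SimpleGraph.Walk

variable {V : Type*} {G : SimpleGraph V}

theorem exists_eq_append_of_pair_sublist_support {u v y z : V} (p : G.Walk u v)
    (h : [z, y] <+ p.support) :
    ∃ (q : G.Walk u y) (r : G.Walk y v), p = q.append r ∧ z ∈ q.support := by
  induction p with
  | nil => simp at h
  | cons hab p ih =>
    rw [support_cons] at h
    cases h with
    | cons _ h =>
      obtain ⟨q, r, rfl, hz⟩ := ih h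
      exact ⟨cons hab q, r, rfl, List.mem_cons_of_mem _ hz⟩
    | cons_cons _ h =>
      obtain ⟨q, r, rfl⟩ := mem_support_iff_exists_append.mp (List.singleton_sublist.mp h)
      exact ⟨cons hab q, r, rfl, start_mem_support _⟩

theorem exists_eq_append_of_triple_sublist_support {u v x y z : V} (p : G.Walk u v)
    (h : [x, z, y] <+ p.support) :
    ∃ (p₁ : G.Walk u x) (q : G.Walk x y) (p₂ : G.Walk y v),
      p = p₁.append (q.append p₂) ∧ z ∈ q.support := by
  induction p with
  | nil => simp at h
  | cons hab p ih =>
    rw [support_cons] at h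
    cases h with
    | cons _ h =>
      obtain ⟨p₁, q, p₂, rfl, hz⟩ := ih h
      exact ⟨cons hab p₁, q, p₂, rfl, hz⟩
    | cons_cons _ h =>
      obtain ⟨q, p₂, rfl, hz⟩ := p.exists_eq_append_of_pair_sublist_support h
      exact ⟨nil, cons hab q, p₂, rfl, List.mem_cons_of_mem _ hz⟩

theorem exists_eq_append_cons_of_mem_edges {u v x y : V} (p : G.Walk u v)
    (h : s(x, y) ∈ p.edges) :
    ∃ (a b : V) (p₁ : G.Walk u a) (hab : G.Adj a b) (p₂ : G.Walk b v),
      p = p₁.append (cons hab p₂) ∧ s(a, b) = s(x, y) := by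
  induction p with
  | nil => simp at h
  | @cons a b _ hab p ih =>
    rw [edges_cons, List.mem_cons] at h
    rcases h with h | h
    · exact ⟨a, b, nil, hab, p, rfl, h.symm⟩
    · obtain ⟨a', b', p₁, hab', p₂, rfl, he⟩ := ih h
      exact ⟨a', b', cons hab p₁, hab', p₂, rfl, he⟩

theorem length_bypass_lt_length_of_not_isPath [DecidableEq V] {u v : V} (p : G.Walk u v)
    (hp : ¬ p.IsPath) : p.bypass.length < p.length := by
  by_contra! h
  exact hp (p.bypass_eq_self_of_length_le_length_bypass h ▸ p.bypass_isPath)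

end SimpleGraph.Walk

section EDP

variable {V : Type*} {G : SimpleGraph V} {ι : Type*} [Fintype ι] {X : ι → V × V}

theorem WalkFamily.nodup_sum_edges_iff (P : WalkFamily G X) :
    (∑ n, ((P n).edges : Multiset (Sym2 V))).Nodup ↔
      (∀ n, (P n).edges.Nodup) ∧ PairwiseEdgeDisjoint G X P := by
  change (univ.val.bind fun n => ((P n).edges : Multiset (Sym2 V))).Nodup ↔ _
  simp only [Multiset.nodup_bind, Multiset.coe_nodup, mem_val, mem_univ, true_implies]
  refine and_congr_right fun _ => ⟨fun h n n' hn e he he' => ?_, fun h => ?_⟩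
  · exact (Multiset.coe_disjoint _ _).1 (h.forall (mem_univ n) (mem_univ n') hn) he he'
  · exact univ.nodup.pairwise fun n _ n' _ hn =>
      (Multiset.coe_disjoint _ _).2 fun e he he' => h n n' hn e he he'

theorem WalkFamily.sum_length_eq_card_sum_edges (P : WalkFamily G X) :
    ∑ n, (P n).length = Multiset.card (∑ n, ((P n).edges : Multiset (Sym2 V))) := by
  simp [Multiset.card_sum]

theorem WalkFamily.sum_edges_update_update_add [DecidableEq ι] (P : WalkFamily G X) {i m : ι}
    (him : i ≠ m) (W : G.Walk (X i).1 (X i).2) (Q : G.Walk (X m).1 (X m).2) :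
    ∑ n, ((Function.update (Function.update P m Q) i W n).edges : Multiset (Sym2 V)) +
        ((P i).edges + (P m).edges) =
      ∑ n, ((P n).edges : Multiset (Sym2 V)) + (W.edges + Q.edges) := by
  simp only [Function.apply_update (fun n (p : G.Walk (X n).1 (X n).2) =>
    (p.edges : Multiset (Sym2 V)))]
  exact sum_update_update_add _ him _ _

variable {P : WalkFamily G X} {i m : ι}

theorem IsEDPSolution.update_update [DecidableEq ι] (hP : IsEDPSolution G X P) (him : i ≠ m)
    {W : G.Walk (X i).1 (X i).2} {Q : G.Walk (X m).1 (X m).2} (hW : W.IsPath) (hQ : Q.IsPath)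
    (hWQ : (W.edges : Multiset (Sym2 V)) + Q.edges ≤ (P i).edges + (P m).edges) :
    IsEDPSolution G X (Function.update (Function.update P m Q) i W) := by
  have hpath : ∀ n, (Function.update (Function.update P m Q) i W n).IsPath :=
    (Function.forall_update_iff _ fun n (p : G.Walk (X n).1 (X n).2) => p.IsPath).2
      ⟨hW, fun n _ =>
        (Function.forall_update_iff P fun n (p : G.Walk (X n).1 (X n).2) => p.IsPath).2
          ⟨hQ, fun n _ => hP.1 n⟩ n⟩
  have hle : ∑ n, ((Function.update (Function.update P m Q) i W n).edges : Multiset (Sym2 V)) ≤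
      ∑ n, ((P n).edges : Multiset (Sym2 V)) :=
    le_of_add_le_add_right ((P.sum_edges_update_update_add him W Q).trans_le
      (add_le_add_right hWQ _))
  have hnodup := (WalkFamily.nodup_sum_edges_iff P).2
    ⟨fun n => (hP.1 n).isTrail.edges_nodup, hP.2⟩
  exact ⟨hpath, ((WalkFamily.nodup_sum_edges_iff _).1 (Multiset.nodup_of_le hle hnodup)).2⟩

theorem IsMinEDPSolution.isPath_of_edges_add_eq_edges_add (hP : IsMinEDPSolution G X P)
    (him : i ≠ m) (W : G.Walk (X i).1 (X i).2) (Q : G.Walk (X m).1 (X m).2)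
    (hWQ : (W.edges : Multiset (Sym2 V)) + Q.edges = (P i).edges + (P m).edges) :
    W.IsPath ∧ Q.IsPath := by
  classical
  by_contra hWQ_path
  have hbypass_le : (W.bypass.edges : Multiset (Sym2 V)) + Q.bypass.edges ≤
      (P i).edges + (P m).edges :=
    hWQ ▸ add_le_add (Multiset.coe_le.2 W.edges_bypass_sublist_edges.subperm)
      (Multiset.coe_le.2 Q.edges_bypass_sublist_edges.subperm)
  have hbypass_lt : W.bypass.length + Q.bypass.length < W.length + Q.length := by
    rcases not_and_or.1 hWQ_path with hW | hQ
    · linarith [W.length_bypass_lt_length_of_not_isPath hW, Q.length_bypass_le_length]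
    · linarith [Q.length_bypass_lt_length_of_not_isPath hQ, W.length_bypass_le_length]
  have hmin := hP.2 _ (hP.1.update_update him W.bypass_isPath Q.bypass_isPath hbypass_le)
  have hcard := congrArg Multiset.card (P.sum_edges_update_update_add him W.bypass Q.bypass)
  have hcardWQ := congrArg Multiset.card hWQ
  rw [WalkFamily.sum_length_eq_card_sum_edges, WalkFamily.sum_length_eq_card_sum_edges] at hmin
  simp only [Multiset.card_add, Multiset.coe_card, Walk.length_edges] at hcard hcardWQ
  omega

theorem IsMinEDPSolution.notMem_support_of_triple_sublist (hP : IsMinEDPSolution G X P)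
    (him : i ≠ m) {x y z : V} (hxzy : [x, z, y] <+ (P i).support)
    (hxy : s(x, y) ∈ (P m).edges) :
    z ∉ (P m).support := by
  intro hz
  obtain ⟨W₁, M, W₂, hW, hzM⟩ := (P i).exists_eq_append_of_triple_sublist_support hxzy
  obtain ⟨a, b, A, hab, B, hQ, hab_xy⟩ := (P m).exists_eq_append_cons_of_mem_edges hxy
  have hz_xy : z ≠ x ∧ z ≠ y := by
    have := hxzy.nodup (hP.1.1 i).support_nodup
    simp only [List.nodup_cons, List.mem_cons, List.not_mem_nil] at this
    tauto
  obtain ⟨N, hN, hzN, hz_ab⟩ : ∃ N : G.Walk a b,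
      (N.edges : Multiset (Sym2 V)) = M.edges ∧ z ∈ N.support ∧ z ≠ a ∧ z ≠ b := by
    rcases Sym2.eq_iff.1 hab_xy with ⟨rfl, rfl⟩ | ⟨rfl, rfl⟩
    · exact ⟨M, rfl, hzM, hz_xy⟩
    · exact ⟨M.reverse, by simp, by simpa using hzM, hz_xy.symm⟩
  have hxy_adj : G.Adj x y := (P m).adj_of_mem_edges hxy
  have hpath := (hP.isPath_of_edges_add_eq_edges_add him (W₁.append (Walk.cons hxy_adj W₂))
    (A.append (N.append B)) (by
      rw [hW, hQ]
      simp only [Walk.edges_append, Walk.edges_cons, ← Multiset.coe_add, ← Multiset.cons_coe,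
        ← Multiset.singleton_add, hN, hab_xy]
      abel)).2
  rw [hQ, Walk.mem_support_append_iff, Walk.support_cons, List.mem_cons] at hz
  rcases hz with hzA | hzB | hzB
  · exact hpath.ne_of_mem_support_of_append hz_ab.1 hzA
      ((Walk.mem_support_append_iff _ _).2 (Or.inl hzN)) rfl
  · exact hz_ab.1 hzB
  · rw [Walk.append_assoc] at hpath
    exact hpath.ne_of_mem_support_of_append hz_ab.2
      ((Walk.mem_support_append_iff _ _).2 (Or.inr hzN)) hzB rfl

end EDP

/-- With `L` the ordered list of clique vertices of a path `P i₀` of a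
minimum EDP solution on a split graph, two distinct intersecting edges `L[i] L[i']` and
`L[j] L[j']` (with `i < i'`, `j < j'`, `i ≤ j < i'`) are non-compatible: no single other
path of the solution contains both. -/
theorem min_edp_solution_intersecting_noncompatible {V : Type*} [Fintype V] [DecidableEq V]
    (G : SimpleGraph V)
    (C : Finset V)
    {k : ℕ} (X : Fin k → V × V)
    (P : WalkFamily G X) (hP : IsMinEDPSolution G X P)
    (i₀ : Fin k)
    (L : List V) (hL : L = (P i₀).support.filter (fun y => decide (y ∈ C)))
    (i i' j j' : ℕ) (hii' : i < i') (hjj' : j < j') (hij : i ≤ j)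
    (hint : j < i') (hne : (i, i') ≠ (j, j'))
    (hi' : i' < L.length) (hj' : j' < L.length) :
    ¬ ∃ m : Fin k, m ≠ i₀ ∧
        Sym2.mk (L[i]'(by omega)) (L[i']'hi') ∈ (P m).edges ∧
        Sym2.mk (L[j]'(by omega)) (L[j']'hj') ∈ (P m).edges := by
  rintro ⟨m, hm, hi_edge, hj_edge⟩
  obtain ⟨a, b, c, hab, hbc, hc, hac, hb⟩ : ∃ a b c, ∃ (hab : a < b) (hbc : b < c)
      (hc : c < L.length), s(L[a], L[c]) ∈ (P m).edges ∧ L[b] ∈ (P m).support := by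
    obtain hij | rfl := hij.lt_or_eq
    · exact ⟨i, j, i', hij, hint, hi', hi_edge, (P m).fst_mem_support_of_mem_edges hj_edge⟩
    obtain hlt | rfl | hgt := lt_trichotomy i' j'
    · exact ⟨i, i', j', hii', hlt, hj', hj_edge, (P m).snd_mem_support_of_mem_edges hi_edge⟩
    · exact absurd rfl hne
    · exact ⟨i, j', i', hjj', hgt, hi', hi_edge, (P m).snd_mem_support_of_mem_edges hj_edge⟩
  have hL_sub : L <+ (P i₀).support := hL ▸ List.filter_sublist
  exact hP.notMem_support_of_triple_sublist hm.symm
    ((L.triple_getElem_sublist hab hbc hc).trans hL_sub) hac hb
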